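/- arXiv:0810.4279 — 4 statements merged into one kernel-verified Lean document; each statement's English description precedes it below -/
import Mathlib

section
/- Let S be a finite set of nonzero vectors in ℤ^n and let V be a real linear subspace of ℝ^n with 1 ≤ dim V ≤ n − 1. Suppose that every vector of V is a nonnegative real linear combination of elements of S ∩ V (i.e., the elements of S lying in V positively span V). Then S is 'special': there exist k distinct elements v_1, …, v_k ∈ S with 1 ≤ k ≤ n and positive integers a_1, …, a_k such that a_1 v_1 + ⋯ + a_k v_k = 0. (This is the combinatorial heart of Proposition 1.7: the fiber fan of a proper surjective toric morphism with lower-dimensional target is a complete fan in a proper subspace, forcing a positive relation among at most n ray generators.) -/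
/-!
The elements of `S` lying in `V` satisfy a real linear relation with nonnegative, not all zero
coefficients: add nonnegative representations of `x` and `-x` for some `x ≠ 0` in `V`. Among
the positive relations take one with minimal support `T`. Dropping any vector of `T` leaves a
linearly independent family in `V`, so `|T| ≤ dim V + 1 ≤ n`, and the relations supported on `T`
form a line. Since the vectors are integral, that line contains a nonzero integer relation; it is
a multiple of the positive one, so up to sign all its coefficients are positive integers.
-/

/-- The canonical map `ℤ^n → ℝ^n`. -/
def toReal {n : ℕ} (v : Fin n → ℤ) : Fin n → ℝ := fun i => (v i : ℝ)

/-- A finite set `S` of vectors in `ℤ^n` is *special* if there exist `k` distinct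
elements `v 0, …, v (k-1)` of `S` with `1 ≤ k ≤ n` and positive integers
`a 0, …, a (k-1)` such that `∑ i, a i • v i = 0`. -/
def IsSpecial (n : ℕ) (S : Finset (Fin n → ℤ)) : Prop :=
  ∃ (k : ℕ) (v : Fin k → (Fin n → ℤ)) (a : Fin k → ℤ),
    1 ≤ k ∧ k ≤ n ∧ Function.Injective v ∧ (∀ i, v i ∈ S) ∧
    (∀ i, 0 < a i) ∧ ∑ i, a i • v i = 0

open Finset Matrix

section PosRelation

variable {𝕜 E ι : Type*} [Field 𝕜] [AddCommGroup E] [Module 𝕜 E] {f : ι → E}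

lemma eq_div_mul_of_linearIndepOn_erase [DecidableEq ι] {T : Finset ι} {c z : ι → 𝕜} {w : ι}
    (hw : w ∈ T) (hind : LinearIndepOn 𝕜 f ↑(T.erase w)) (hcw : c w ≠ 0)
    (hcrel : ∑ i ∈ T, c i • f i = 0) (hzrel : ∑ i ∈ T, z i • f i = 0) :
    ∀ i ∈ T, z i = z w / c w * c i := by
  set e : ι → 𝕜 := fun i => z i - z w / c w * c i
  have hew : e w = 0 := by simp [e, div_mul_cancel₀ _ hcw]
  have herel : ∑ i ∈ T.erase w, e i • f i = 0 := by
    rw [sum_erase _ (by rw [hew, zero_smul])]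
    simp only [e, sub_smul, mul_smul, sum_sub_distrib, ← smul_sum, hcrel, hzrel, smul_zero,
      sub_zero]
  intro i hi
  have hei : e i = 0 := by
    rcases eq_or_ne i w with rfl | hiw
    · exact hew
    · exact linearIndepOn_finset_iff.1 hind e herel i (mem_erase.2 ⟨hiw, hi⟩)
  exact sub_eq_zero.1 hei

lemma LinearIndepOn.card_le_finrank_of_forall_mem {s : Finset ι} {V : Submodule 𝕜 E}
    [Module.Finite 𝕜 V] (h : LinearIndepOn 𝕜 f ↑s) (hV : ∀ i ∈ s, f i ∈ V) :
    s.card ≤ Module.finrank 𝕜 V := by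
  have : LinearIndependent 𝕜 (fun i : s => (⟨f i, hV i i.2⟩ : V)) :=
    LinearIndependent.of_comp V.subtype h
  simpa using this.fintype_card_le_finrank

variable [LinearOrder 𝕜]

variable (𝕜) in
def HasPosRelation (f : ι → E) (T : Finset ι) : Prop :=
  T.Nonempty ∧ ∃ c : ι → 𝕜, (∀ i ∈ T, 0 < c i) ∧ ∑ i ∈ T, c i • f i = 0

lemma hasPosRelation_filter_ne_zero [DecidableEq ι] {s : Finset ι} {c : ι → 𝕜}
    (hc : ∀ i ∈ s, 0 ≤ c i) (hrel : ∑ i ∈ s, c i • f i = 0) (hne : ∃ i ∈ s, c i ≠ 0) :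
    HasPosRelation 𝕜 f (s.filter (c · ≠ 0)) := by
  obtain ⟨i, hi, hci⟩ := hne
  refine ⟨⟨i, mem_filter.2 ⟨hi, hci⟩⟩, c, fun j hj => ?_, ?_⟩
  · obtain ⟨hjs, hcj⟩ := mem_filter.1 hj
    exact (hc j hjs).lt_of_ne' hcj
  · rwa [sum_filter_of_ne fun j _ => mt fun hcj => by rw [hcj, zero_smul]]

variable [IsStrictOrderedRing 𝕜]

lemma exists_hasPosRelation_of_positivelySpans [DecidableEq ι] (V : Submodule 𝕜 E)
    (hV : V ≠ ⊥) (s : Finset ι)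
    (hspan : ∀ x ∈ V, ∃ c : ι → 𝕜, (∀ i, 0 ≤ c i) ∧ (∀ i ∈ s, c i ≠ 0 → f i ∈ V) ∧
      x = ∑ i ∈ s, c i • f i) :
    ∃ T ⊆ s, (∀ i ∈ T, f i ∈ V) ∧ HasPosRelation 𝕜 f T := by
  obtain ⟨x, hxV, hx0⟩ := Submodule.exists_mem_ne_zero_of_ne_bot hV
  obtain ⟨c₁, hc₁, hc₁V, rfl⟩ := hspan x hxV
  obtain ⟨c₂, hc₂, hc₂V, hc₂x⟩ := hspan _ (V.neg_mem hxV)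
  refine ⟨s.filter ((c₁ + c₂) · ≠ 0), filter_subset _ _, fun i hi => ?_,
    hasPosRelation_filter_ne_zero (fun i _ => add_nonneg (hc₁ i) (hc₂ i)) ?_ ?_⟩
  · obtain ⟨his, hci⟩ := mem_filter.1 hi
    by_cases h₁ : c₁ i = 0
    · exact hc₂V i his (by simpa [h₁] using hci)
    · exact hc₁V i his h₁
  · simp only [Pi.add_apply, add_smul, sum_add_distrib, ← hc₂x, add_neg_cancel]
  · by_contra! h
    refine hx0 (sum_eq_zero fun i hi => ?_)
    have := h i hi
    rw [Pi.add_apply, add_eq_zero_iff_of_nonneg (hc₁ i) (hc₂ i)] at this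
    rw [this.1, zero_smul]

/-- Moving `c` against the direction `d` until a first coefficient vanishes. -/
lemma exists_ssubset_hasPosRelation_of_relation [DecidableEq ι] {T : Finset ι} {c d : ι → 𝕜}
    {w : ι} (hc : ∀ i ∈ T, 0 < c i) (hcrel : ∑ i ∈ T, c i • f i = 0)
    (hdrel : ∑ i ∈ T, d i • f i = 0) (hw : w ∈ T) (hdw : d w = 0)
    (hd : ∃ i ∈ T, 0 < d i) :
    ∃ T' ⊂ T, HasPosRelation 𝕜 f T' := by
  obtain ⟨u, hu, hmin⟩ := exists_min_image (T.filter (0 < d ·)) (fun i => c i / d i)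
    (let ⟨i, hi, hdi⟩ := hd; ⟨i, mem_filter.2 ⟨hi, hdi⟩⟩)
  obtain ⟨huT, hdu⟩ := mem_filter.1 hu
  set t := c u / d u
  have hc' : ∀ i ∈ T, 0 ≤ c i - t * d i := by
    intro i hi
    rcases le_or_gt (d i) 0 with hdi | hdi
    · nlinarith [hc i hi, div_pos (hc u huT) hdu]
    · have := hmin i (mem_filter.2 ⟨hi, hdi⟩)
      rw [le_div_iff₀ hdi] at this
      linarith
  have hrel : ∑ i ∈ T, (c i - t * d i) • f i = 0 := by
    simp only [sub_smul, mul_smul, sum_sub_distrib, ← smul_sum, hcrel, hdrel, smul_zero,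
      sub_zero]
  refine ⟨_, ?_, hasPosRelation_filter_ne_zero hc' hrel ⟨w, hw, by simp [hdw, (hc w hw).ne']⟩⟩
  refine (ssubset_iff_of_subset (filter_subset _ _)).2 ⟨u, huT, ?_⟩
  simp [t, div_mul_cancel₀ _ hdu.ne']

lemma exists_ssubset_hasPosRelation_of_not_linearIndepOn_erase [DecidableEq ι]
    {T : Finset ι} {w : ι} (hT : HasPosRelation 𝕜 f T) (hw : w ∈ T)
    (hdep : ¬LinearIndepOn 𝕜 f ↑(T.erase w)) :
    ∃ T' ⊂ T, HasPosRelation 𝕜 f T' := by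
  obtain ⟨-, c, hc, hcrel⟩ := hT
  rw [linearIndepOn_finset_iff] at hdep
  push Not at hdep
  obtain ⟨g, hgrel, i, hi, hgi⟩ := hdep
  have hextend : ∀ g : ι → 𝕜, ∑ j ∈ T.erase w, g j • f j = 0 →
      ∑ j ∈ T, Function.update g w 0 j • f j = 0 := by
    intro g hg
    rw [← sum_erase (f := fun j => Function.update g w 0 j • f j) (a := w) _ (by simp), ← hg]
    exact sum_congr rfl fun j hj => by rw [Function.update_of_ne (ne_of_mem_erase hj)]
  have hupdate : ∀ g : ι → 𝕜, Function.update g w 0 i = g i :=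
    fun g => Function.update_of_ne (ne_of_mem_erase hi) _ _
  rcases hgi.lt_or_gt with hneg | hpos
  · refine exists_ssubset_hasPosRelation_of_relation hc hcrel (hextend (-g) ?_) hw (by simp)
      ⟨i, mem_of_mem_erase hi, by simpa [hupdate] using hneg⟩
    simp [neg_smul, sum_neg_distrib, hgrel]
  · exact exists_ssubset_hasPosRelation_of_relation hc hcrel (hextend g hgrel) hw (by simp)
      ⟨i, mem_of_mem_erase hi, by rwa [hupdate]⟩

lemma exists_hasPosRelation_linearIndepOn_erase [DecidableEq ι] {T : Finset ι}
    (hT : HasPosRelation 𝕜 f T) :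
    ∃ T' ⊆ T, HasPosRelation 𝕜 f T' ∧ ∀ w ∈ T', LinearIndepOn 𝕜 f ↑(T'.erase w) := by
  induction T using Finset.strongInduction with
  | H T ih =>
    by_cases hind : ∀ w ∈ T, LinearIndepOn 𝕜 f ↑(T.erase w)
    · exact ⟨T, Subset.rfl, hT, hind⟩
    push Not at hind
    obtain ⟨w, hw, hdep⟩ := hind
    obtain ⟨T', hT'T, hT'⟩ := exists_ssubset_hasPosRelation_of_not_linearIndepOn_erase hT hw hdep
    obtain ⟨T'', hT''T', hT''⟩ := ih T' hT'T hT'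
    exact ⟨T'', hT''T'.trans hT'T.subset, hT''⟩

end PosRelation

/-- Through the Gram matrix `Mᵀ * M` the claim becomes the vanishing of a determinant, which
can be read off in `ℤ`; then `M y = 0` follows from `(M y) ⬝ᵥ (M y) = y ⬝ᵥ (Mᵀ * M) *ᵥ y`. -/
lemma Matrix.exists_int_mulVec_eq_zero {m ι K : Type*} [Fintype m] [Fintype ι] [DecidableEq ι]
    [CommRing K] [IsDomain K] [CharZero K] (M : Matrix m ι ℤ) {x : ι → K} (hx0 : x ≠ 0)
    (hx : M.map (Int.cast : ℤ → K) *ᵥ x = 0) :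
    ∃ y : ι → ℤ, y ≠ 0 ∧ M *ᵥ y = 0 := by
  have hK : ((Mᵀ * M).map (Int.castRingHom K)).det = 0 := by
    refine exists_mulVec_eq_zero_iff.1 ⟨x, hx0, ?_⟩
    rw [Matrix.map_mul, transpose_map, ← mulVec_mulVec]
    exact (congrArg _ hx).trans (mulVec_zero _)
  have hdet : (Mᵀ * M).det = 0 := by
    have := ((Int.castRingHom K).map_det _).trans hK
    rwa [eq_intCast, Int.cast_eq_zero] at this
  obtain ⟨y, hy0, hy⟩ := exists_mulVec_eq_zero_iff.2 hdet
  refine ⟨y, hy0, dotProduct_self_eq_zero.1 ?_⟩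
  calc (M *ᵥ y) ⬝ᵥ (M *ᵥ y) = (y ᵥ* Mᵀ) ⬝ᵥ (M *ᵥ y) := by rw [vecMul_transpose]
    _ = y ⬝ᵥ (Mᵀ *ᵥ (M *ᵥ y)) := (dotProduct_mulVec _ _ _).symm
    _ = 0 := by rw [mulVec_mulVec, hy, dotProduct_zero]

lemma sum_intCast_smul_toReal {n : ℕ} (T : Finset (Fin n → ℤ)) (y : (Fin n → ℤ) → ℤ) :
    ∑ v ∈ T, (y v : ℝ) • toReal v = toReal (∑ v ∈ T, y v • v) := by
  ext i
  simp [toReal, Finset.sum_apply]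

lemma exists_int_relation {n : ℕ} (T : Finset (Fin n → ℤ)) {x : (Fin n → ℤ) → ℝ}
    (hx : ∑ v ∈ T, x v • toReal v = 0) (hne : ∃ v ∈ T, x v ≠ 0) :
    ∃ y : (Fin n → ℤ) → ℤ, ∑ v ∈ T, y v • v = 0 ∧ ∃ v ∈ T, y v ≠ 0 := by
  let M : Matrix (Fin n) T ℤ := Matrix.of fun i v => (v : Fin n → ℤ) i
  have hMx : M.map (Int.cast : ℤ → ℝ) *ᵥ (fun v => x v) = 0 := by
    ext i
    have := congrFun hx i
    simp only [Finset.sum_apply, Pi.smul_apply, smul_eq_mul, toReal, Pi.zero_apply] at this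
    simpa [mulVec, dotProduct, M, mul_comm, sum_attach T (fun v => x v * (v i : ℝ))] using this
  obtain ⟨v, hv, hxv⟩ := hne
  obtain ⟨y, hy0, hy⟩ := M.exists_int_mulVec_eq_zero (fun h => hxv (congrFun h ⟨v, hv⟩)) hMx
  obtain ⟨u, hyu⟩ := Function.ne_iff.1 hy0
  refine ⟨fun v => if h : v ∈ T then y ⟨v, h⟩ else 0, ?_, u, u.2, by simpa using hyu⟩
  ext i
  have := congrFun hy i
  simp only [mulVec, dotProduct, M, Pi.zero_apply] at this
  rw [Finset.sum_apply, ← sum_coe_sort T]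
  simpa [mul_comm] using this

lemma exists_pos_int_relation {n : ℕ} {T : Finset (Fin n → ℤ)} {w : Fin n → ℤ} (hw : w ∈ T)
    (hind : LinearIndepOn ℝ toReal (T.erase w : Set (Fin n → ℤ))) {c : (Fin n → ℤ) → ℝ}
    (hc : ∀ v ∈ T, 0 < c v) (hcrel : ∑ v ∈ T, c v • toReal v = 0) :
    ∃ a : (Fin n → ℤ) → ℤ, (∀ v ∈ T, 0 < a v) ∧ ∑ v ∈ T, a v • v = 0 := by
  obtain ⟨y, hyrel, u, hu, hyu⟩ := exists_int_relation T hcrel ⟨w, hw, (hc w hw).ne'⟩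
  have hzrel : ∑ v ∈ T, (y v : ℝ) • toReal v = 0 := by
    rw [sum_intCast_smul_toReal, hyrel]
    exact funext fun _ => Int.cast_zero
  have hz := eq_div_mul_of_linearIndepOn_erase hw hind (hc w hw).ne' hcrel hzrel
  have hscale : (y w : ℝ) / c w ≠ 0 := by
    intro h
    exact hyu ((Int.cast_eq_zero (α := ℝ)).1 ((hz u hu).trans (by rw [h, zero_mul])))
  refine ⟨fun v => y w * y v, fun v hv => ?_, ?_⟩
  · have : (0 : ℝ) < y w * y v := by
      rw [hz w hw, hz v hv]
      exact (mul_pos (mul_self_pos.2 hscale) (mul_pos (hc w hw) (hc v hv))).trans_eq (by ring)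
    exact_mod_cast this
  · simp only [mul_smul, ← smul_sum, hyrel, smul_zero]

lemma isSpecial_of_pos_int_relation {n : ℕ} {S T : Finset (Fin n → ℤ)} (hTS : T ⊆ S)
    (hT : T.Nonempty) (hcard : T.card ≤ n) {a : (Fin n → ℤ) → ℤ} (ha : ∀ v ∈ T, 0 < a v)
    (hrel : ∑ v ∈ T, a v • v = 0) : IsSpecial n S := by
  let e := T.equivFin.symm
  refine ⟨T.card, fun i => e i, fun i => a (e i), card_pos.2 hT, hcard,
    Subtype.val_injective.comp e.injective, fun i => hTS (e i).2, fun i => ha _ (e i).2, ?_⟩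
  rw [e.sum_comp (fun v => a v • (v : Fin n → ℤ)), sum_coe_sort T (fun v => a v • v), hrel]

theorem special_of_subspace_positively_spanned_general (n : ℕ) (S : Finset (Fin n → ℤ))
    (V : Submodule ℝ (Fin n → ℝ))
    (hdim₁ : 1 ≤ Module.finrank ℝ V) (hdim₂ : Module.finrank ℝ V ≤ n - 1)
    (hspan : ∀ x ∈ V, ∃ c : (Fin n → ℤ) → ℝ,
      (∀ v, 0 ≤ c v) ∧ (∀ v ∈ S, c v ≠ 0 → toReal v ∈ V) ∧
      x = ∑ v ∈ S, c v • toReal v) :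
    IsSpecial n S := by
  obtain ⟨T₀, hT₀S, hT₀V, hT₀⟩ :=
    exists_hasPosRelation_of_positivelySpans V (by rintro rfl; simp at hdim₁) S hspan
  obtain ⟨T, hTT₀, ⟨⟨w, hw⟩, c, hc, hcrel⟩, hind⟩ := exists_hasPosRelation_linearIndepOn_erase hT₀
  have hcard : T.card ≤ n := by
    have := (hind w hw).card_le_finrank_of_forall_mem
      (V := V) fun v hv => hT₀V v (hTT₀ (mem_of_mem_erase hv))
    rw [card_erase_of_mem hw] at this
    omega
  obtain ⟨a, ha, harel⟩ := exists_pos_int_relation hw (hind w hw) hc hcrel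
  exact isSpecial_of_pos_int_relation (hTT₀.trans hT₀S) ⟨w, hw⟩ hcard ha harel

/-- Let `S` be a finite set of nonzero vectors in `ℤ^n` and let `V ⊆ ℝ^n` be a real
linear subspace with `1 ≤ dim V ≤ n - 1`.  If every vector of `V` is a nonnegative real
linear combination of the elements of `S` lying in `V`, then `S` is *special*. -/
theorem special_of_subspace_positively_spanned (n : ℕ) (S : Finset (Fin n → ℤ))
    (hnz : ∀ v ∈ S, v ≠ 0) (V : Submodule ℝ (Fin n → ℝ))
    (hdim₁ : 1 ≤ Module.finrank ℝ V) (hdim₂ : Module.finrank ℝ V ≤ n - 1)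
    (hspan : ∀ x ∈ V, ∃ c : (Fin n → ℤ) → ℝ,
      (∀ v, 0 ≤ c v) ∧ (∀ v ∈ S, c v ≠ 0 → toReal v ∈ V) ∧
      x = ∑ v ∈ S, c v • toReal v) :
    IsSpecial n S :=
  special_of_subspace_positively_spanned_general n S V hdim₁ hdim₂ hspan
end

section
/- Let S be a finite set of nonzero vectors in ℤ^n (n ≥ 1) such that every vector of ℝ^n is a nonnegative real linear combination of elements of S (i.e., S positively spans ℝ^n; this is the completeness of the fan). If S is 'general', then there exist exactly n + 1 distinct elements v_1, …, v_{n+1} ∈ S and positive integers a_1, …, a_{n+1} such that a_1 v_1 + ⋯ + a_{n+1} v_{n+1} = 0. (Combinatorial version, for 'general' sets, of Batyrev's Proposition 3.6: on a complete toric n-fold there is a primitive relation with trivial focus, and 'generality' forces it to involve exactly n + 1 generators.) -/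
/-!
Writing `-∑ v` as a nonnegative combination of `S` and adding `∑ v` gives a relation
`∑ d_v v = 0` with all `d_v > 0` real. The vectors are rational, so applying a suitable
`ℚ`-linear functional to the coefficients `d_v` gives a positive rational relation: `0` lies in
the rational convex hull of `S`. Carathéodory's theorem in `ℚ^n` extracts an
affinely independent subfamily, of at most `n + 1` vectors, still having `0` in its convex hull;
clearing denominators makes that relation integral, and generality excludes at most `n` vectors.
-/

open Finset

theorem exists_pos_rat_relation_of_real {ι κ : Type*} [Fintype ι] (z : ι → κ → ℚ)
    (d : ι → ℝ) (hd : ∀ i, 0 < d i) (h : ∀ j, ∑ i, d i * z i j = 0) :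
    ∃ g : ι → ℚ, (∀ i, 0 < g i) ∧ ∀ j, ∑ i, g i * z i j = 0 := by
  set V := Submodule.span ℚ (Set.range d)
  have : FiniteDimensional ℚ V := FiniteDimensional.span_of_finite ℚ (Set.finite_range d)
  let x (i : ι) : V := ⟨d i, Submodule.subset_span ⟨i, rfl⟩⟩
  -- A `ℚ`-linear functional on `V` turns the real relation into a rational one; choosing it
  -- close to the inclusion `V → ℝ` keeps all coefficients positive.
  have hrel (φ : V →ₗ[ℚ] ℚ) (j : κ) : ∑ i, φ (x i) * z i j = 0 := by
    have : ∑ i, z i j • x i = 0 := by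
      ext
      simpa [x, mul_comm, Rat.smul_def] using h j
    simpa [mul_comm, map_sum] using congrArg φ this
  let b := Module.finBasis ℚ V
  -- `F i y` is the image of `x i` under the functional `b k ↦ y k`, so `F i b = d i`.
  let F (i : ι) (y : Fin (Module.finrank ℚ V) → ℝ) : ℝ := ∑ k, (b.repr (x i) k : ℝ) * y k
  let U := {y | ∀ i, 0 < F i y}
  have hU : IsOpen U := by
    simp only [U, Set.ofPred_forall]
    exact isOpen_iInter_of_finite fun i => isOpen_lt continuous_const (by fun_prop)
  have hbU : (fun k => (b k : ℝ)) ∈ U := by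
    intro i
    have hx := congrArg Subtype.val (b.sum_repr (x i))
    rw [Submodule.coe_sum] at hx
    simp only [F, Submodule.coe_smul, Rat.smul_def] at hx ⊢
    rw [hx]
    exact hd i
  obtain ⟨q, hq⟩ :=
    (DenseRange.piMap fun _ => Rat.denseRange_cast).exists_mem_open hU ⟨_, hbU⟩
  let φ : V →ₗ[ℚ] ℚ := ∑ k, q k • b.coord k
  refine ⟨fun i => φ (x i), fun i => ?_, hrel φ⟩
  have hqi := hq i
  simp only [F, Pi.map_apply] at hqi
  simp only [φ, LinearMap.coe_sum, LinearMap.coe_smul, Finset.sum_apply, Pi.smul_apply,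
    Module.Basis.coord_apply, smul_eq_mul]
  rw [← Rat.cast_pos (K := ℝ)]
  push_cast
  simpa only [mul_comm] using hqi

theorem exists_pos_int_relation_of_rat {ι E : Type*} [Fintype ι] [AddCommGroup E] [Module ℚ E]
    (z : ι → E) (g : ι → ℚ) (hg : ∀ i, 0 < g i) (h : ∑ i, g i • z i = 0) :
    ∃ a : ι → ℤ, (∀ i, 0 < a i) ∧ ∑ i, a i • z i = 0 := by
  set N : ℕ := ∏ i, (g i).den
  have hN : (0 : ℚ) < N := by positivity
  have hint (i : ι) : ∃ a : ℤ, (a : ℚ) = N * g i := by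
    obtain ⟨c, hc⟩ : (g i).den ∣ N := dvd_prod_of_mem (fun i => (g i).den) (mem_univ i)
    refine ⟨c * (g i).num, ?_⟩
    push_cast
    rw [hc, ← Rat.mul_den_eq_num]
    push_cast
    ring
  choose a ha using hint
  refine ⟨a, fun i => ?_, ?_⟩
  · exact Int.cast_pos.mp (by rw [ha i]; exact mul_pos hN (hg i))
  · simp_rw [← Int.cast_smul_eq_zsmul ℚ, ha, mul_smul, ← smul_sum, h, smul_zero]

theorem exists_pos_int_relation_of_zero_mem_convexHull {E : Type*} [AddCommGroup E] [Module ℚ E]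
    [FiniteDimensional ℚ E] {s : Set E} (h0 : (0 : E) ∈ convexHull ℚ s) :
    ∃ k, 0 < k ∧ k ≤ Module.finrank ℚ E + 1 ∧ ∃ (z : Fin k → E) (a : Fin k → ℤ),
      Function.Injective z ∧ (∀ i, z i ∈ s) ∧ (∀ i, 0 < a i) ∧ ∑ i, a i • z i = 0 := by
  obtain ⟨ι, _, z, w, hzs, hind, hw, hw1, hrel⟩ := eq_pos_convex_span_of_mem_convexHull h0
  obtain ⟨a, ha, hrel⟩ := exists_pos_int_relation_of_rat z w hw hrel
  have : Nonempty ι := univ_nonempty_iff.mp (nonempty_of_sum_ne_zero (hw1.trans_ne one_ne_zero))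
  let e := Fintype.equivFin ι
  refine ⟨_, Fintype.card_pos, ?_, z ∘ e.symm, a ∘ e.symm, hind.injective.comp e.symm.injective,
    fun i => hzs ⟨_, rfl⟩, fun i => ha _, ?_⟩
  · exact hind.card_le_finrank_succ.trans (by simpa using Submodule.finrank_le _)
  · simpa [e.symm.sum_comp (fun i => a i • z i)] using hrel

def PositivelySpans {n : ℕ} (S : Finset (Fin n → ℤ)) : Prop :=
  ∀ x : Fin n → ℝ, ∃ c : (Fin n → ℤ) → ℝ, (∀ v, 0 ≤ c v) ∧ x = ∑ v ∈ S, c v • toReal v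

theorem PositivelySpans.exists_pos_real_relation {n : ℕ} {S : Finset (Fin n → ℤ)}
    (hspan : PositivelySpans S) :
    ∃ d : (Fin n → ℤ) → ℝ, (∀ v, 0 < d v) ∧ ∑ v ∈ S, d v • toReal v = 0 := by
  obtain ⟨c, hc, hsum⟩ := hspan (-∑ v ∈ S, toReal v)
  refine ⟨fun v => c v + 1, fun v => by linarith [hc v], ?_⟩
  simp only [add_smul, one_smul, sum_add_distrib, ← hsum, neg_add_cancel]

theorem PositivelySpans.nonempty {n : ℕ} (hn : 1 ≤ n) {S : Finset (Fin n → ℤ)}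
    (hspan : PositivelySpans S) : S.Nonempty := by
  rw [nonempty_iff_ne_empty]
  rintro rfl
  obtain ⟨c, -, h⟩ := hspan 1
  simpa using congrFun h ⟨0, hn⟩

theorem PositivelySpans.zero_mem_convexHull {n : ℕ} (hn : 1 ≤ n) {S : Finset (Fin n → ℤ)}
    (hspan : PositivelySpans S) :
    (0 : Fin n → ℚ) ∈ convexHull ℚ ((Int.castAddHom ℚ).compLeft (Fin n) '' S) := by
  obtain ⟨d, hd, hrel⟩ := hspan.exists_pos_real_relation
  obtain ⟨g, hg, hgrel⟩ := exists_pos_rat_relation_of_real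
    (fun v : S => (Int.castAddHom ℚ).compLeft (Fin n) v) (fun v => d v) (fun v => hd v)
    (fun j => by
      simpa [sum_attach S (fun v => d v * (v j : ℝ)), toReal, mul_comm] using congrFun hrel j)
  have : Nonempty S := (hspan.nonempty hn).to_subtype
  have hsum : ∑ v : S, g v • (Int.castAddHom ℚ).compLeft (Fin n) v = 0 := by
    ext j
    simpa using hgrel j
  have hmem := centerMass_mem_convexHull (s := (Int.castAddHom ℚ).compLeft (Fin n) '' S) univ
    (fun v _ => (hg v).le) (sum_pos (fun v _ => hg v) univ_nonempty)
    (z := fun v : S => (Int.castAddHom ℚ).compLeft (Fin n) v) (fun v _ => ⟨v, v.2, rfl⟩)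
  rwa [centerMass, hsum, smul_zero] at hmem

theorem general_complete_relation_general (n : ℕ) (hn : 1 ≤ n) (S : Finset (Fin n → ℤ))
    (hspan : ∀ x : Fin n → ℝ, ∃ c : (Fin n → ℤ) → ℝ,
      (∀ v, 0 ≤ c v) ∧ x = ∑ v ∈ S, c v • toReal v)
    (hgen : ¬ IsSpecial n S) :
    ∃ (v : Fin (n + 1) → (Fin n → ℤ)) (a : Fin (n + 1) → ℤ),
      Function.Injective v ∧ (∀ i, v i ∈ S) ∧ (∀ i, 0 < a i) ∧
      ∑ i, a i • v i = 0 := by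
  obtain ⟨k, hk, hkn, z, a, hz, hzS, ha, hrel⟩ := exists_pos_int_relation_of_zero_mem_convexHull
    (PositivelySpans.zero_mem_convexHull hn hspan)
  rw [Module.finrank_fin_fun] at hkn
  choose v hvS hvz using hzS
  have hv : Function.Injective v := fun i j h => hz (by rw [← hvz i, ← hvz j, h])
  have hvrel : ∑ i, a i • v i = 0 := by
    refine (map_eq_zero_iff ((Int.castAddHom ℚ).compLeft (Fin n))
      Int.cast_injective.comp_left).mp ?_
    simpa only [map_sum, map_zsmul, hvz] using hrel
  obtain hkn | rfl := hkn.lt_or_eq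
  · exact (hgen ⟨k, v, a, hk, by omega, hv, hvS, ha, hvrel⟩).elim
  · exact ⟨v, a, hv, hvS, ha, hvrel⟩

/-- Let `S` be a finite set of nonzero vectors in `ℤ^n` (`n ≥ 1`) which positively spans
`ℝ^n`.  If `S` is *general*, then there exist exactly `n + 1` distinct elements
`v 0, …, v n` of `S` and positive integers `a 0, …, a n` with `∑ i, a i • v i = 0`. -/
theorem general_complete_relation (n : ℕ) (hn : 1 ≤ n) (S : Finset (Fin n → ℤ))
    (hnz : ∀ v ∈ S, v ≠ 0)
    (hspan : ∀ x : Fin n → ℝ, ∃ c : (Fin n → ℤ) → ℝ,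
      (∀ v, 0 ≤ c v) ∧ x = ∑ v ∈ S, c v • toReal v)
    (hgen : ¬ IsSpecial n S) :
    ∃ (v : Fin (n + 1) → (Fin n → ℤ)) (a : Fin (n + 1) → ℤ),
      Function.Injective v ∧ (∀ i, v i ∈ S) ∧ (∀ i, 0 < a i) ∧
      ∑ i, a i • v i = 0 :=
  general_complete_relation_general n hn S hspan hgen
end

section
/- Let v_1, …, v_{n+1} ∈ ℤ^n (n ≥ 1) be such that every n-element subset of {v_1, …, v_{n+1}} is a ℤ-basis of ℤ^n. Suppose there exist positive integers a_1, …, a_{n+1} with a_1 v_1 + ⋯ + a_{n+1} v_{n+1} = 0. Then a_1 = a_2 = ⋯ = a_{n+1}, and consequently v_1 + v_2 + ⋯ + v_{n+1} = 0. (This is the combinatorial content of the remark that a primitive collection of length n + 1 with trivial focus on a smooth complete toric n-fold forces the fan to be that of ℙ^n.) -/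
/-!
Removing `v j` leaves a basis of `ℤ^n`, so writing `v j` in it and comparing with the relation
`a j • v j = -∑_{i ≠ j} a i • v i` coefficientwise gives `a j ∣ a i` for every `i`. Divisibility in
both directions between positive integers forces all the `a i` to coincide, and dividing the
relation by the common value gives `∑ i, v i = 0`.
-/

open Submodule

theorem Fin.dvd_of_sum_smul_eq_zero {R M : Type*} [CommRing R] [AddCommGroup M] [Module R M]
    {n : ℕ} {v : Fin (n + 1) → M} {a : Fin (n + 1) → R} (hrel : ∑ i, a i • v i = 0)
    {j : Fin (n + 1)} (hli : LinearIndependent R fun i => v (j.succAbove i))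
    (hmem : v j ∈ span R (Set.range fun i => v (j.succAbove i))) {k : Fin (n + 1)}
    (hkj : k ≠ j) : a j ∣ a k := by
  obtain ⟨c, hc⟩ := (mem_span_range_iff_exists_fun R).mp hmem
  obtain ⟨i, rfl⟩ := Fin.exists_succAbove_eq hkj
  have hsum : ∑ i, (a j * c i + a (j.succAbove i)) • v (j.succAbove i) = 0 := by
    simp only [add_smul, mul_smul, Finset.sum_add_distrib, ← Finset.smul_sum, hc]
    rw [← Fin.sum_univ_succAbove (fun i => a i • v i) j, hrel]
  have hcoeff := Fintype.linearIndependent_iff.mp hli _ hsum i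
  exact ⟨-c i, by linear_combination hcoeff⟩

theorem positive_relation_of_unimodular_general (n : ℕ)
    (v : Fin (n + 1) → (Fin n → ℤ))
    (hbasis : ∀ j : Fin (n + 1),
      Submodule.span ℤ (Set.range fun i : Fin n => v (j.succAbove i)) = ⊤)
    (a : Fin (n + 1) → ℤ) (hpos : ∀ i, 0 < a i)
    (hrel : ∑ i, a i • v i = 0) :
    (∀ i j : Fin (n + 1), a i = a j) ∧ ∑ i, v i = 0 := by
  have hdvd : ∀ i j, i ≠ j → a i ∣ a j := fun i j hij =>
    Fin.dvd_of_sum_smul_eq_zero hrel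
      (linearIndependent_of_top_le_span_of_card_eq_finrank (hbasis i).ge (by simp))
      (by simp [hbasis i]) hij.symm
  have heq : ∀ i j, a i = a j := fun i j => by
    rcases eq_or_ne i j with rfl | hij
    · rfl
    · exact Int.dvd_antisymm (hpos i).le (hpos j).le (hdvd i j hij) (hdvd j i hij.symm)
  refine ⟨heq, (smul_right_injective _ (hpos 0).ne').eq_iff.mp ?_⟩
  rw [smul_zero, Finset.smul_sum, ← hrel]
  exact Finset.sum_congr rfl fun i _ => by rw [heq 0 i]

/-- Let `v 0, …, v n ∈ ℤ^n` (`n ≥ 1`) be vectors such that every `n`-element subset of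
them generates `ℤ^n` as a `ℤ`-module (i.e. is a `ℤ`-basis of `ℤ^n`).  If there are
positive integers `a 0, …, a n` with `∑ i, a i • v i = 0`, then all the `a i` are equal
and `∑ i, v i = 0`. -/
theorem positive_relation_of_unimodular (n : ℕ) (hn : 1 ≤ n)
    (v : Fin (n + 1) → (Fin n → ℤ))
    (hbasis : ∀ j : Fin (n + 1),
      Submodule.span ℤ (Set.range fun i : Fin n => v (j.succAbove i)) = ⊤)
    (a : Fin (n + 1) → ℤ) (hpos : ∀ i, 0 < a i)
    (hrel : ∑ i, a i • v i = 0) :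
    (∀ i j : Fin (n + 1), a i = a j) ∧ ∑ i, v i = 0 :=
  positive_relation_of_unimodular_general n v hbasis a hpos hrel
end

section
/- Let m ≥ 4 and let v_1, …, v_m ∈ ℤ² be pairwise distinct nonzero vectors such that, with indices taken modulo m, det(v_i, v_{i+1}) = 1 for every i, the two-dimensional cones σ_i = { s·v_i + t·v_{i+1} : s, t ≥ 0 } cover ℝ², and the interiors of distinct σ_i are pairwise disjoint (i.e., the v_i are the ray generators of a complete nonsingular fan in ℝ² with at least 4 rays). Then there exist indices i ≠ j with v_i = −v_j. (This is the combinatorial content of the claim in the introduction that every smooth projective toric surface other than ℙ² admits a surjective toric morphism to ℙ¹, hence carries a nontrivial nef line bundle that is not big.) -/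
/-- The determinant `u₁ w₂ - u₂ w₁` of two vectors in `ℤ²`. -/
def det2 (u w : ℤ × ℤ) : ℤ := u.1 * w.2 - u.2 * w.1

/-- The canonical map `ℤ² → ℝ²`. -/
def toR2 (u : ℤ × ℤ) : ℝ × ℝ := ((u.1 : ℝ), (u.2 : ℝ))

/-- The cone in `ℝ²` spanned by (the real images of) two integer vectors. -/
def cone2 (u w : ℤ × ℤ) : Set (ℝ × ℝ) :=
  {x | ∃ s t : ℝ, 0 ≤ s ∧ 0 ≤ t ∧ x = s • toR2 u + t • toR2 w}

/-!
Since consecutive rays form lattice bases, two parallel rays are equal or opposite; so assume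
no two rays are parallel. No ray enters the interior of another cone (nudging it towards its
successor would give a common interior point), hence along the cycle the sign of
`det2 (v s) (v ·)` never rises from `-` to `+`, and `-v s` lies inside some cone `σ j`.
Writing `-v s = a • v j + b • v (j + 1)` with integers `a, b ≥ 1` and pairing with `v (s + 1)`
shows that `-v (s + 1)` lies inside `σ j` too, unless `j = s + 1`. At most one index `s` has
`-v s` inside `σ (s + 1)`: two such indices would be adjacent, and for adjacent ones the same
lattice computation fails once `m ≥ 4`. Starting after that index and going once around the
cycle, one cone `σ j` contains every `-v s`, including `-v j`, which is absurd.
-/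

open Fin.NatCast in
theorem Fin.add_natCast_ne_self {m : ℕ} [NeZero m] (s : Fin m) {k : ℕ} (hk₀ : 0 < k)
    (hk : k < m) : s + (k : Fin m) ≠ s := by
  rw [Ne, add_eq_left, Fin.ext_iff, Fin.val_natCast, Nat.mod_eq_of_lt hk, Fin.val_zero]
  omega

open Fin.NatCast in
theorem Fin.add_one_add_one_add_one_ne {m : ℕ} [NeZero m] (hm : 4 ≤ m) (s : Fin m) :
    s + 1 + 1 + 1 ≠ s ∧ s + 1 + 1 + 1 ≠ s + 1 := by
  constructor
  · convert s.add_natCast_ne_self (k := 1 + 1 + 1) (by norm_num) (by omega) using 1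
    simp only [Nat.cast_add, Nat.cast_one]; abel
  · convert (s + 1).add_natCast_ne_self (k := 1 + 1) (by norm_num) (by omega) using 1
    simp only [Nat.cast_add, Nat.cast_one]; abel

open Fin.NatCast in
theorem Fin.cycle_induction {m : ℕ} [NeZero m] {P : Fin m → Prop} {a : Fin m} (ha : P a)
    (hstep : ∀ t, t + 1 ≠ a → P t → P (t + 1)) (t : Fin m) : P t := by
  have hreach : ∀ k : ℕ, P (a + k) := by
    intro k
    induction k with
    | zero => simpa using ha
    | succ k ih =>
      rw [Nat.cast_succ, ← add_assoc]
      by_cases hwrap : a + k + 1 = a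
      · rwa [hwrap]
      · exact hstep _ hwrap ih
  simpa using hreach (t - a).val

lemma det2_swap (u w : ℤ × ℤ) : det2 w u = -det2 u w := by
  simp only [det2]; ring

lemma det2_self (u : ℤ × ℤ) : det2 u u = 0 := by
  simp only [det2]; ring

lemma det2_plucker (u w x y : ℤ × ℤ) :
    det2 u w * det2 y x = det2 x w * det2 y u + det2 u x * det2 y w := by
  simp only [det2]; ring

lemma det2_smul_add_det2_smul {u w : ℤ × ℤ} (h : det2 u w = 1) (x : ℤ × ℤ) :
    det2 x w • u + det2 u x • w = x := by
  simp only [det2] at h ⊢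
  ext <;> simp only [Prod.fst_add, Prod.snd_add, Prod.smul_fst, Prod.smul_snd, smul_eq_mul]
  · linear_combination x.1 * h
  · linear_combination x.2 * h

lemma det2_smul_add_right (n : ℤ) (u x y : ℤ × ℤ) :
    det2 u (n • x + y) = n * det2 u x + det2 u y := by
  simp only [det2, Prod.fst_add, Prod.snd_add, Prod.smul_fst, Prod.smul_snd, smul_eq_mul]; ring

lemma det2_smul_add_left (n : ℤ) (x y w : ℤ × ℤ) :
    det2 (n • x + y) w = n * det2 x w + det2 y w := by
  simp only [det2, Prod.fst_add, Prod.snd_add, Prod.smul_fst, Prod.smul_snd, smul_eq_mul]; ring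

lemma eq_or_eq_neg_of_det2_eq_zero {u w x y : ℤ × ℤ} (huw : det2 u w = 1) (hxy : det2 x y = 1)
    (hux : det2 u x = 0) : x = u ∨ x = -u := by
  have hx : x = det2 x w • u := by
    simpa [hux] using (det2_smul_add_det2_smul huw x).symm
  generalize det2 x w = k at hx
  subst hx
  have hunit : k * det2 u y = 1 := by
    rw [← hxy]; simp only [det2, Prod.smul_fst, Prod.smul_snd, smul_eq_mul]; ring
  rcases Int.eq_one_or_neg_one_of_mul_eq_one hunit with rfl | rfl <;> simp

/-- The perturbation `x + ε • y` of a point of the open cone `(u, w)`, done in the lattice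
as `n • x + y` with `n` large. -/
lemma exists_det2_pos_of_det2_pos {u w x y : ℤ × ℤ} (hux : 0 < det2 u x) (hxw : 0 < det2 x w)
    (hxy : 0 < det2 x y) :
    ∃ z, 0 < det2 u z ∧ 0 < det2 z w ∧ 0 < det2 x z ∧ 0 < det2 z y := by
  set n := |det2 u y| + |det2 y w| + 1
  have hn : 0 < n := by positivity
  refine ⟨n • x + y, ?_, ?_, ?_, ?_⟩
  · rw [det2_smul_add_right]
    nlinarith [neg_abs_le (det2 u y), abs_nonneg (det2 y w)]
  · rw [det2_smul_add_left]
    nlinarith [neg_abs_le (det2 y w), abs_nonneg (det2 u y)]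
  · rw [det2_smul_add_right, det2_self]; linarith
  · rw [det2_smul_add_left, det2_self]; positivity

lemma toR2_mem_interior_cone2 {u w x : ℤ × ℤ} (huw : 0 < det2 u w) (hux : 0 < det2 u x)
    (hxw : 0 < det2 x w) : toR2 x ∈ interior (cone2 u w) := by
  have hd : (0 : ℝ) < u.1 * w.2 - u.2 * w.1 := by exact_mod_cast huw
  have hopen :
      IsOpen ({y : ℝ × ℝ | 0 < u.1 * y.2 - u.2 * y.1} ∩ {y | 0 < y.1 * w.2 - y.2 * w.1}) :=
    (isOpen_lt continuous_const (by fun_prop)).inter (isOpen_lt continuous_const (by fun_prop))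
  refine mem_interior.mpr ⟨_, ?_, hopen, ?_⟩
  · rintro y ⟨hy₁, hy₂⟩
    refine ⟨(y.1 * w.2 - y.2 * w.1) / (u.1 * w.2 - u.2 * w.1),
      (u.1 * y.2 - u.2 * y.1) / (u.1 * w.2 - u.2 * w.1), (div_pos hy₂ hd).le,
      (div_pos hy₁ hd).le, ?_⟩
    ext <;> simp only [toR2, Prod.fst_add, Prod.snd_add, Prod.smul_fst, Prod.smul_snd,
      smul_eq_mul] <;> rw [div_mul_eq_mul_div, div_mul_eq_mul_div, ← add_div,
      eq_div_iff hd.ne'] <;> ring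
  · constructor <;> simp only [toR2, Set.mem_ofPred_eq] <;> exact_mod_cast ‹_›

section Fan

variable {m : ℕ} [NeZero m] {v : Fin m → ℤ × ℤ}

lemma det2_nonpos_of_disjoint_interiors (hdet : ∀ i, det2 (v i) (v (i + 1)) = 1)
    (hdisj : ∀ i j, i ≠ j →
      interior (cone2 (v i) (v (i + 1))) ∩ interior (cone2 (v j) (v (j + 1))) = ∅)
    {i k : Fin m} (hik : 0 < det2 (v i) (v k)) : det2 (v k) (v (i + 1)) ≤ 0 := by
  by_contra! hki
  have hne : i ≠ k := by rintro rfl; simp [det2_self] at hik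
  obtain ⟨z, hz₁, hz₂, hz₃, hz₄⟩ :=
    exists_det2_pos_of_det2_pos hik hki (by rw [hdet k]; exact one_pos)
  exact (hdisj i k hne).subset
    ⟨toR2_mem_interior_cone2 (by rw [hdet i]; exact one_pos) hz₁ hz₂,
      toR2_mem_interior_cone2 (by rw [hdet k]; exact one_pos) hz₃ hz₄⟩

/-- `-v s` lies in the interior of the cone spanned by `v j` and `v (j + 1)`. -/
def AntipodeInCone (v : Fin m → ℤ × ℤ) (s j : Fin m) : Prop :=
  0 < det2 (v s) (v j) ∧ det2 (v s) (v (j + 1)) < 0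

lemma AntipodeInCone.ne {s j : Fin m} (h : AntipodeInCone v s j) : j ≠ s := by
  rintro rfl
  simpa [det2_self] using h.1

lemma exists_antipodeInCone (hdet : ∀ i, det2 (v i) (v (i + 1)) = 1)
    (hindep : ∀ s t, det2 (v s) (v t) = 0 → s = t) (s : Fin m) :
    ∃ j, AntipodeInCone v s j := by
  by_contra! h
  have hnonneg : ∀ t, 0 ≤ det2 (v s) (v t) := by
    refine Fin.cycle_induction (a := s) (det2_self _).ge fun t _ ht => ?_
    rcases ht.eq_or_lt with h0 | hpos
    · rw [← hindep s t h0.symm, hdet s]; exact zero_le_one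
    · exact not_lt.mp fun hneg => h t ⟨hpos, hneg⟩
  have hlast := hdet (s - 1)
  rw [sub_add_cancel, det2_swap] at hlast
  linarith [hnonneg (s - 1)]

lemma AntipodeInCone.add_one (hdet : ∀ i, det2 (v i) (v (i + 1)) = 1)
    (hindep : ∀ s t, det2 (v s) (v t) = 0 → s = t)
    (hsec : ∀ i k, 0 < det2 (v i) (v k) → det2 (v k) (v (i + 1)) ≤ 0)
    {s j : Fin m} (h : AntipodeInCone v s j) (hj : j ≠ s + 1) : AntipodeInCone v (s + 1) j := by
  have hpl := det2_plucker (v j) (v (j + 1)) (v s) (v (s + 1))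
  rw [hdet j, det2_swap (v s) (v (s + 1)), hdet s, det2_swap (v s) (v j)] at hpl
  have hd₁ : det2 (v (s + 1)) (v j) ≠ 0 := fun h0 => hj (hindep _ _ h0).symm
  have hd₂ : det2 (v (s + 1)) (v (j + 1)) ≠ 0 :=
    fun h0 => h.ne (add_right_cancel (hindep _ _ h0)).symm
  rcases hd₁.lt_or_gt with hneg | hpos
  · have := hsec j (s + 1) (by rw [det2_swap]; linarith)
    nlinarith [h.1, h.2]
  · refine ⟨hpos, lt_of_le_of_ne ?_ hd₂⟩
    nlinarith [h.1, h.2]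

lemma AntipodeInCone.det2_nonpos (hindep : ∀ s t, det2 (v s) (v t) = 0 → s = t)
    (hsec : ∀ i k, 0 < det2 (v i) (v k) → det2 (v k) (v (i + 1)) ≤ 0)
    {s : Fin m} (h : AntipodeInCone v s (s + 1)) {u : Fin m} (hu : u ≠ s + 1) :
    det2 (v s) (v u) ≤ 0 := by
  have key : ∀ u, u = s + 1 ∨ det2 (v s) (v u) ≤ 0 := by
    refine Fin.cycle_induction (Or.inl rfl) fun t ht hP => Or.inr ?_
    rcases hP with rfl | hle
    · exact h.2.le
    rcases hle.lt_or_eq with hlt | h0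
    · exact hsec t s (by rw [det2_swap]; linarith)
    · exact absurd (by rw [hindep s t h0]) ht
  exact (key u).resolve_left hu

lemma not_antipodeInCone_add_one_of_add_one (hm : 4 ≤ m)
    (hdet : ∀ i, det2 (v i) (v (i + 1)) = 1) (hindep : ∀ s t, det2 (v s) (v t) = 0 → s = t)
    (hsec : ∀ i k, 0 < det2 (v i) (v k) → det2 (v k) (v (i + 1)) ≤ 0)
    {s : Fin m} (hs : AntipodeInCone v s (s + 1)) :
    ¬AntipodeInCone v (s + 1) (s + 1 + 1) := by
  intro hs'
  have hpl := det2_plucker (v (s + 1 + 1)) (v (s + 1 + 1 + 1)) (v (s + 1)) (v s)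
  rw [hdet (s + 1 + 1), hdet s, det2_swap (v (s + 1)) (v (s + 1 + 1)), hdet (s + 1)] at hpl
  obtain ⟨hne₀, hne₁⟩ := Fin.add_one_add_one_add_one_ne hm s
  have hfar : det2 (v s) (v (s + 1 + 1 + 1)) < 0 :=
    (hs.det2_nonpos hindep hsec hne₁).lt_of_ne fun h0 => hne₀ (hindep _ _ h0).symm
  nlinarith [hs.2, hs'.2]

lemma eq_of_antipodeInCone_add_one (hm : 4 ≤ m)
    (hdet : ∀ i, det2 (v i) (v (i + 1)) = 1) (hindep : ∀ s t, det2 (v s) (v t) = 0 → s = t)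
    (hsec : ∀ i k, 0 < det2 (v i) (v k) → det2 (v k) (v (i + 1)) ≤ 0)
    {s t : Fin m} (hs : AntipodeInCone v s (s + 1)) (ht : AntipodeInCone v t (t + 1)) : s = t := by
  by_cases hts : t = s + 1
  · subst hts; exact absurd ht (not_antipodeInCone_add_one_of_add_one hm hdet hindep hsec hs)
  by_cases hst : s = t + 1
  · subst hst; exact absurd hs (not_antipodeInCone_add_one_of_add_one hm hdet hindep hsec ht)
  have h₁ := hs.det2_nonpos hindep hsec hts
  have h₂ := ht.det2_nonpos hindep hsec hst
  rw [det2_swap] at h₂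
  exact hindep s t (by linarith)

theorem exists_ne_det2_eq_zero (hm : 4 ≤ m) (hdet : ∀ i, det2 (v i) (v (i + 1)) = 1)
    (hsec : ∀ i k, 0 < det2 (v i) (v k) → det2 (v k) (v (i + 1)) ≤ 0) :
    ∃ s t, s ≠ t ∧ det2 (v s) (v t) = 0 := by
  by_contra! hne
  have hindep : ∀ s t, det2 (v s) (v t) = 0 → s = t :=
    fun s t h0 => by_contra fun hst => hne s t hst h0
  obtain ⟨t, ht⟩ : ∃ t, ∀ s, AntipodeInCone v s (s + 1) → s = t := by
    by_cases h : ∃ t, AntipodeInCone v t (t + 1)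
    · obtain ⟨t, ht⟩ := h
      exact ⟨t, fun s hs => eq_of_antipodeInCone_add_one hm hdet hindep hsec hs ht⟩
    · push Not at h
      exact ⟨0, fun s hs => absurd hs (h s)⟩
  obtain ⟨j, hj⟩ := exists_antipodeInCone hdet hindep (t + 1)
  have hall : ∀ s, AntipodeInCone v s j := by
    refine Fin.cycle_induction hj fun s hs hsj => hsj.add_one hdet hindep hsec fun hjs => hs ?_
    rw [ht s (hjs ▸ hsj)]
  exact (hall j).ne rfl

end Fan

/-- Let `v 0, …, v (m-1)` (`m ≥ 4`) be the ray generators of a complete nonsingular fan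
in `ℝ²`: they are pairwise distinct nonzero vectors, consecutive pairs (indices mod `m`)
have determinant `1`, the two-dimensional cones `σ i = cone (v i) (v (i+1))` cover `ℝ²`,
and distinct such cones have disjoint interiors.  Then some ray generator is the
negative of another, i.e. there are `i ≠ j` with `v i = - v j`. -/
theorem smooth_complete_surface_fan_has_opposite_rays (m : ℕ) (hm : 4 ≤ m)
    (v : Fin m → ℤ × ℤ)
    (hinj : Function.Injective v)
    (hdet : ∀ i : Fin m, det2 (v i) (v (i + ⟨1, by omega⟩)) = 1)
    (hdisj : ∀ i j : Fin m, i ≠ j →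
      interior (cone2 (v i) (v (i + ⟨1, by omega⟩))) ∩
        interior (cone2 (v j) (v (j + ⟨1, by omega⟩))) = ∅) :
    ∃ i j : Fin m, i ≠ j ∧ v i = - v j := by
  have : NeZero m := ⟨by omega⟩
  have hone : (⟨1, by omega⟩ : Fin m) = 1 := Fin.ext (Nat.mod_eq_of_lt (by omega)).symm
  simp only [hone] at hdet hdisj
  obtain ⟨s, t, hst, h0⟩ :=
    exists_ne_det2_eq_zero hm hdet fun _ _ => det2_nonpos_of_disjoint_interiors hdet hdisj
  rcases eq_or_eq_neg_of_det2_eq_zero (hdet s) (hdet t) h0 with h | h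
  · exact absurd (hinj h) hst.symm
  · exact ⟨t, s, hst.symm, h⟩
end
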